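/- arXiv:1603.05430 — 4 statements merged into one kernel-verified Lean document; each statement's English description precedes it below -/
import Mathlib

section
/- Let n, d ≥ 1 and r ≥ 1. Suppose that the set Σ_{n,2d}(r) of sums of r squares of degree-d forms has nonempty interior in ℝ[x_1,…,x_n]_{2d}, and that there exists a form f ∈ Σ_{n,2d} with ℓ(f) ≥ r. Then the set {f ∈ Σ_{n,2d} : ℓ(f) = r} of forms of sum of squares length exactly r has nonempty interior in ℝ[x_1,…,x_n]_{2d}. (Hence the set of typical sos lengths is exactly {t(n,2d), t(n,2d)+1, …, p(n,2d)}.) -/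
/-!
Write `Σ(k)` for the set of sums of `k` squares of forms of degree `d` and let `r = k + 1`.
Since `Σ(k)` is closed, `interior Σ(r) \ Σ(k)` is open, and it consists of forms of length
exactly `r`. It is nonempty: otherwise `interior Σ(r) ⊆ Σ(k)`, so `U = interior Σ(k)` equals
`interior Σ(r)` and is therefore a nonempty open cone stable under adding squares, hence under
adding any sum of squares. A form `f` of length `≥ r` is then the limit of the points `f + t • u`
of `U` (`u ∈ U`, `t → 0⁺`), so `f ∈ Σ(k)`, which is absurd.

`Σ(k)` is closed because `(p₁, …, p_k) ↦ ∑ pᵢ²` is proper: finitely many points determine a form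
of degree `d`, and at each of them `pᵢ(x)² ≤ (∑ pⱼ²)(x)`.
-/

open MvPolynomial

noncomputable section

/-- `f` is a sum of `r` squares of forms of degree `d` in `n` variables. -/
def IsSOS (n d r : ℕ) (f : MvPolynomial (Fin n) ℝ) : Prop :=
  ∃ p : Fin r → MvPolynomial (Fin n) ℝ,
    (∀ i, (p i).IsHomogeneous d) ∧ f = ∑ i, p i ^ 2

/-- `f` lies in `Σ_{n,2d}`: it is a sum of squares of forms of degree `d`. -/
def InSigma (n d : ℕ) (f : MvPolynomial (Fin n) ℝ) : Prop :=
  ∃ r, IsSOS n d r f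

/-- The sum of squares length `ℓ(f)`. -/
def sosLength (n d : ℕ) (f : MvPolynomial (Fin n) ℝ) : ℕ :=
  sInf {r | IsSOS n d r f}

/-- The coefficientwise topology on polynomials; on each finite-dimensional
subspace of forms of fixed degree it induces the standard topology. -/
instance (n : ℕ) : TopologicalSpace (MvPolynomial (Fin n) ℝ) :=
  TopologicalSpace.induced (fun f (m : Fin n →₀ ℕ) => MvPolynomial.coeff m f) inferInstance

open scoped Pointwise

theorem IsArtinian.exists_finset_iInf_eq {R M ι : Type*} [Ring R] [AddCommGroup M] [Module R M]
    [IsArtinian R M] (p : ι → Submodule R M) : ∃ s : Finset ι, ⨅ i ∈ s, p i = ⨅ i, p i := by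
  classical
  obtain ⟨_, ⟨s, rfl⟩, hmin⟩ := (wellFounded_lt (α := Submodule R M)).has_min
    (Set.range fun s : Finset ι => ⨅ i ∈ s, p i) ⟨_, ∅, rfl⟩
  refine ⟨s, le_antisymm (le_iInf fun j => ?_) (le_iInf₂ fun i _ => iInf_le p i)⟩
  have hle : ⨅ i ∈ insert j s, p i ≤ ⨅ i ∈ s, p i := biInf_mono fun _ => Finset.mem_insert_of_mem
  have := (eq_of_le_of_not_lt hle (hmin _ ⟨insert j s, rfl⟩)).ge
  rw [Finset.iInf_insert] at this
  exact this.trans inf_le_left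

open Filter Topology in
theorem mem_closure_of_forall_add_mem {X : Type*} [AddCommMonoid X] [Module ℝ X]
    [TopologicalSpace X] [ContinuousAdd X] [ContinuousSMul ℝ X] {U : Set X} (hU : U.Nonempty)
    (hcone : ∀ t : ℝ, 0 < t → ∀ u ∈ U, t • u ∈ U) {c : X} (hc : ∀ u ∈ U, c + u ∈ U) :
    c ∈ closure U := by
  obtain ⟨u, hu⟩ := hU
  have hlim : Tendsto (fun t : ℝ => c + t • u) (𝓝[>] 0) (𝓝 c) := by
    have : Continuous fun t : ℝ => c + t • u := by fun_prop
    simpa using (this.tendsto 0).mono_left nhdsWithin_le_nhds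
  exact mem_closure_of_tendsto hlim
    (eventually_nhdsWithin_of_forall fun t ht => hc _ (hcone t ht u hu))

namespace MvPolynomial

instance {σ R : Type*} [CommSemiring R] [Finite σ] (e : ℕ) :
    Module.Finite R (homogeneousSubmodule σ R e) :=
  Module.Finite.iff_fg.mpr (homogeneousSubmodule_fg σ R e)

variable {n : ℕ}

theorem continuous_coeff (m : Fin n →₀ ℕ) :
    Continuous fun p : MvPolynomial (Fin n) ℝ => coeff m p :=
  (continuous_apply m).comp continuous_induced_dom

theorem continuous_of_continuous_coeff {X : Type*} [TopologicalSpace X]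
    {f : X → MvPolynomial (Fin n) ℝ} (h : ∀ m, Continuous fun x => coeff m (f x)) :
    Continuous f :=
  continuous_induced_rng.mpr (continuous_pi h)

instance : T2Space (MvPolynomial (Fin n) ℝ) :=
  (Topology.IsEmbedding.mk (Topology.IsInducing.induced _)
    fun _ _ h => MvPolynomial.ext _ _ (congrFun h)).t2Space

instance : IsTopologicalRing (MvPolynomial (Fin n) ℝ) where
  continuous_add := continuous_of_continuous_coeff fun m => by
    simp only [coeff_add]
    exact ((continuous_coeff m).comp continuous_fst).add ((continuous_coeff m).comp continuous_snd)
  continuous_mul := continuous_of_continuous_coeff fun m => by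
    simp only [coeff_mul]
    exact continuous_finsetSum _ fun u _ =>
      ((continuous_coeff _).comp continuous_fst).mul ((continuous_coeff _).comp continuous_snd)
  continuous_neg := continuous_of_continuous_coeff fun m => by
    simp only [coeff_neg]
    exact (continuous_coeff m).neg

instance : ContinuousSMul ℝ (MvPolynomial (Fin n) ℝ) where
  continuous_smul := continuous_of_continuous_coeff fun m => by
    simp only [coeff_smul, smul_eq_mul]
    exact continuous_fst.mul ((continuous_coeff m).comp continuous_snd)

def evalAt (F : Finset (Fin n → ℝ)) (e : ℕ) : homogeneousSubmodule (Fin n) ℝ e →ₗ[ℝ] F → ℝ :=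
  LinearMap.pi fun x => (aeval x.1).toLinearMap ∘ₗ Submodule.subtype _

@[simp]
theorem evalAt_apply (F : Finset (Fin n → ℝ)) {e : ℕ} (p : homogeneousSubmodule (Fin n) ℝ e)
    (x : F) : evalAt F e p x = eval x.1 p := by
  simp [evalAt]

theorem exists_ker_evalAt_eq_bot (e : ℕ) :
    ∃ F : Finset (Fin n → ℝ), LinearMap.ker (evalAt F e) = ⊥ := by
  obtain ⟨F, hF⟩ := IsArtinian.exists_finset_iInf_eq fun x : Fin n → ℝ =>
    LinearMap.ker ((aeval x).toLinearMap ∘ₗ (homogeneousSubmodule (Fin n) ℝ e).subtype)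
  refine ⟨F, ?_⟩
  rw [evalAt, LinearMap.ker_pi, iInf_subtype, hF, eq_bot_iff]
  intro p hp
  simp only [Submodule.mem_iInf, LinearMap.mem_ker, LinearMap.coe_comp, Function.comp_apply,
    Submodule.coe_subtype, AlgHom.toLinearMap_apply] at hp
  exact (Submodule.mem_bot ℝ).mpr (Subtype.ext (funext fun x => by simpa using hp x))

end MvPolynomial

section SumsOfSquares

variable {n d k l : ℕ} {f g : MvPolynomial (Fin n) ℝ}

theorem isSOS_zero : IsSOS n d k 0 :=
  ⟨0, fun _ => isHomogeneous_zero _ _ _, by simp⟩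

theorem isSOS_sq {q : MvPolynomial (Fin n) ℝ} (hq : q.IsHomogeneous d) : IsSOS n d 1 (q ^ 2) :=
  ⟨fun _ => q, fun _ => hq, by simp⟩

theorem IsSOS.eq_zero (h : IsSOS n d 0 f) : f = 0 := by
  obtain ⟨p, -, rfl⟩ := h
  simp

theorem IsSOS.add (hf : IsSOS n d k f) (hg : IsSOS n d l g) : IsSOS n d (k + l) (f + g) := by
  obtain ⟨p, hp, rfl⟩ := hf
  obtain ⟨q, hq, rfl⟩ := hg
  exact ⟨Fin.append p q, Fin.addCases (by simpa using hp) (by simpa using hq),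
    by simp [Fin.sum_univ_add]⟩

theorem IsSOS.exists_add_sq (h : IsSOS n d (k + 1) f) :
    ∃ g q, IsSOS n d k g ∧ q.IsHomogeneous d ∧ f = g + q ^ 2 := by
  obtain ⟨p, hp, rfl⟩ := h
  exact ⟨_, p (Fin.last k), ⟨_, fun i => hp i.castSucc, rfl⟩, hp _, Fin.sum_univ_castSucc _⟩

theorem IsSOS.mono (h : IsSOS n d k f) (hkl : k ≤ l) : IsSOS n d l f := by
  obtain ⟨j, rfl⟩ := Nat.exists_eq_add_of_le hkl
  simpa using h.add (isSOS_zero (k := j))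

theorem IsSOS.smul (h : IsSOS n d k f) {t : ℝ} (ht : 0 ≤ t) : IsSOS n d k (t • f) := by
  obtain ⟨p, hp, rfl⟩ := h
  refine ⟨fun i => √t • p i, fun i => Submodule.smul_mem (homogeneousSubmodule _ ℝ d) _ (hp i), ?_⟩
  simp [Finset.smul_sum, smul_pow, Real.sq_sqrt ht]

theorem IsSOS.isHomogeneous (h : IsSOS n d k f) : f.IsHomogeneous (2 * d) := by
  obtain ⟨p, hp, rfl⟩ := h
  exact IsHomogeneous.sum _ _ _ fun i _ => by simpa [mul_comm] using (hp i).pow 2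

theorem IsSOS.sosLength_le (h : IsSOS n d k f) : sosLength n d f ≤ k :=
  Nat.sInf_le h

theorem sosLength_eq_succ (h : IsSOS n d (k + 1) f) (h' : ¬ IsSOS n d k f) :
    sosLength n d f = k + 1 :=
  h.sosLength_le.antisymm <| Nat.succ_le_of_lt <| lt_of_not_ge fun hle =>
    h' ((Nat.sInf_mem (s := {r | IsSOS n d r f}) ⟨_, h⟩).mono hle)

variable (n d k) in
def sosSet : Set (homogeneousSubmodule (Fin n) ℝ (2 * d)) := {f | IsSOS n d k f}

variable (k) in
def sumSq (p : Fin k → homogeneousSubmodule (Fin n) ℝ d) : homogeneousSubmodule (Fin n) ℝ (2 * d) :=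
  ⟨∑ i, (p i : MvPolynomial (Fin n) ℝ) ^ 2, IsSOS.isHomogeneous ⟨_, fun i => (p i).2, rfl⟩⟩

theorem range_sumSq : Set.range (sumSq (n := n) (d := d) k) = sosSet n d k := by
  ext f
  refine ⟨?_, fun ⟨p, hp, hf⟩ => ⟨fun i => ⟨p i, hp i⟩, Subtype.ext hf.symm⟩⟩
  rintro ⟨p, rfl⟩
  exact ⟨_, fun i => (p i).2, rfl⟩

theorem continuous_sumSq : Continuous (sumSq (n := n) (d := d) k) :=
  (continuous_finsetSum _ fun i _ =>
    (continuous_subtype_val.comp (continuous_apply i)).pow 2).subtype_mk _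

theorem norm_evalAt_le_sqrt (F : Finset (Fin n → ℝ)) (p : Fin k → homogeneousSubmodule (Fin n) ℝ d)
    (i : Fin k) : ‖evalAt F d (p i)‖ ≤ √‖evalAt F (2 * d) (sumSq k p)‖ := by
  refine (pi_norm_le_iff_of_nonneg (Real.sqrt_nonneg _)).mpr fun x => Real.abs_le_sqrt ?_
  calc eval x.1 (p i : MvPolynomial (Fin n) ℝ) ^ 2
      ≤ ∑ j, eval x.1 (p j : MvPolynomial (Fin n) ℝ) ^ 2 :=
        Finset.single_le_sum (f := fun j => eval x.1 (p j : MvPolynomial (Fin n) ℝ) ^ 2)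
          (fun j _ => sq_nonneg _) (Finset.mem_univ i)
    _ = evalAt F (2 * d) (sumSq k p) x := by simp [sumSq]
    _ ≤ ‖evalAt F (2 * d) (sumSq k p)‖ :=
        (le_abs_self _).trans (norm_le_pi_norm (evalAt F (2 * d) (sumSq k p)) x)

theorem isClosed_sosSet : IsClosed (sosSet n d k) := by
  obtain ⟨F, hF⟩ := exists_ker_evalAt_eq_bot (n := n) d
  refine isClosed_of_closure_subset fun f hf => ?_
  set c := ‖evalAt F (2 * d) f‖ + 1
  set O := {g | ‖evalAt F (2 * d) g‖ < c}
  have hO : IsOpen O := isOpen_lt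
    (continuous_norm.comp (evalAt F _).continuous_of_finiteDimensional) continuous_const
  set K : Set (Fin k → homogeneousSubmodule (Fin n) ℝ d) :=
    Set.univ.pi fun _ => evalAt F d ⁻¹' Metric.closedBall 0 √c
  have hK : IsCompact K := isCompact_univ_pi fun _ =>
    (LinearMap.isClosedEmbedding_of_injective hF).isCompact_preimage (isCompact_closedBall _ _)
  have hsub : sosSet n d k ∩ O ⊆ sumSq k '' K := by
    rintro g ⟨hg, hgO⟩
    obtain ⟨p, rfl⟩ := range_sumSq.symm ▸ hg
    refine ⟨p, fun i _ => ?_, rfl⟩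
    simpa using (norm_evalAt_le_sqrt F p i).trans (Real.sqrt_le_sqrt hgO.le)
  have hfO : f ∈ closure (sosSet n d k ∩ O) :=
    Set.inter_comm _ _ ▸ hO.inter_closure ⟨lt_add_one (‖evalAt F (2 * d) f‖), hf⟩
  obtain ⟨p, -, rfl⟩ := (hK.image continuous_sumSq).isClosed.closure_subset (closure_mono hsub hfO)
  exact range_sumSq ▸ Set.mem_range_self p

theorem sosSet_add_subset : sosSet n d k + sosSet n d l ⊆ sosSet n d (k + l) := by
  rintro _ ⟨f, hf, g, hg, rfl⟩
  exact hf.add hg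

theorem sosSet_succ_subset : sosSet n d (k + 1) ⊆ sosSet n d k + sosSet n d 1 := by
  intro f hf
  obtain ⟨g, q, hg, hq, hfq⟩ := IsSOS.exists_add_sq hf
  exact ⟨⟨g, hg.isHomogeneous⟩, hg, ⟨q ^ 2, (isSOS_sq hq).isHomogeneous⟩, isSOS_sq hq,
    Subtype.ext hfq.symm⟩

theorem smul_sosSet_subset {t : ℝ} (ht : 0 ≤ t) : t • sosSet n d k ⊆ sosSet n d k := by
  rintro _ ⟨f, hf, rfl⟩
  exact IsSOS.smul hf ht

theorem not_interior_sosSet_succ_subset (hint : (interior (sosSet n d (k + 1))).Nonempty)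
    {m : ℕ} {f : homogeneousSubmodule (Fin n) ℝ (2 * d)} (hf : f ∈ sosSet n d m)
    (hfk : f ∉ sosSet n d k) : ¬ interior (sosSet n d (k + 1)) ⊆ sosSet n d k := by
  intro hsub
  set U := interior (sosSet n d k)
  have hU : interior (sosSet n d (k + 1)) ⊆ U := interior_maximal hsub isOpen_interior
  have add_sq : ∀ h ∈ sosSet n d 1, ∀ u ∈ U, h + u ∈ U := by
    intro h hh u hu
    have hvadd : h +ᵥ sosSet n d k ⊆ sosSet n d (k + 1) := by
      rintro _ ⟨v, hv, rfl⟩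
      simpa [add_comm] using sosSet_add_subset ⟨h, hh, v, hv, rfl⟩
    have hhu : h +ᵥ u ∈ interior (h +ᵥ sosSet n d k) := by
      rw [interior_vadd]
      exact Set.vadd_mem_vadd_set hu
    exact hU (interior_mono hvadd hhu)
  have add_sos : ∀ j, ∀ h ∈ sosSet n d j, ∀ u ∈ U, h + u ∈ U := by
    intro j
    induction j with
    | zero =>
      intro h hh u hu
      rwa [show h = 0 from Subtype.ext (IsSOS.eq_zero hh), zero_add]
    | succ j ih =>
      intro h hh u hu
      obtain ⟨g, hg, q, hq, rfl⟩ := sosSet_succ_subset hh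
      rw [add_assoc]
      exact ih g hg _ (add_sq q hq u hu)
  have cone : ∀ t : ℝ, 0 < t → ∀ u ∈ U, t • u ∈ U := by
    intro t ht u hu
    have htu : t • u ∈ interior (t • sosSet n d k) := by
      rw [interior_smul₀ ht.ne']
      exact Set.smul_mem_smul_set hu
    exact interior_mono (smul_sosSet_subset ht.le) htu
  exact hfk (closure_minimal interior_subset isClosed_sosSet
    (mem_closure_of_forall_add_mem (hint.mono hU) cone (add_sos m f hf)))

end SumsOfSquares

theorem typical_lengths_general (n d r : ℕ)
    (hint : (interior {f : MvPolynomial.homogeneousSubmodule (Fin n) ℝ (2 * d) |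
      IsSOS n d r (f : MvPolynomial (Fin n) ℝ)}).Nonempty)
    (hlong : ∃ f : MvPolynomial (Fin n) ℝ, InSigma n d f ∧ r ≤ sosLength n d f) :
    (interior {f : MvPolynomial.homogeneousSubmodule (Fin n) ℝ (2 * d) |
      InSigma n d (f : MvPolynomial (Fin n) ℝ) ∧
        sosLength n d (f : MvPolynomial (Fin n) ℝ) = r}).Nonempty := by
  rcases r with _ | k
  · exact hint.mono (interior_mono fun g hg => ⟨⟨0, hg⟩, Nat.le_zero.mp (IsSOS.sosLength_le hg)⟩)
  obtain ⟨f, ⟨m, hfm⟩, hlen⟩ := hlong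
  have hfk : (⟨f, hfm.isHomogeneous⟩ : homogeneousSubmodule (Fin n) ℝ (2 * d)) ∉ sosSet n d k :=
    fun h => by have := IsSOS.sosLength_le (f := f) h; omega
  obtain ⟨g, hg, hgk⟩ := Set.not_subset.mp (not_interior_sosSet_succ_subset hint hfm hfk)
  refine ⟨g, interior_maximal ?_ (isOpen_interior.sdiff isClosed_sosSet) ⟨hg, hgk⟩⟩
  rintro h ⟨hh, hhk⟩
  have hh' : h ∈ sosSet n d (k + 1) := interior_subset hh
  exact ⟨⟨_, hh'⟩, sosLength_eq_succ hh' hhk⟩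

/-- If `Σ_{n,2d}(r)` has nonempty interior and some sum of squares has length
`≥ r`, then the set of forms of sos length exactly `r` has nonempty interior in
`ℝ[x_1,…,x_n]_{2d}`; hence every `r` between the minimal typical length and
`p(n,2d)` is a typical sos length. -/
theorem typical_lengths (n d r : ℕ) (hn : 1 ≤ n) (hd : 1 ≤ d) (hr : 1 ≤ r)
    (hint : (interior {f : MvPolynomial.homogeneousSubmodule (Fin n) ℝ (2 * d) |
      IsSOS n d r (f : MvPolynomial (Fin n) ℝ)}).Nonempty)
    (hlong : ∃ f : MvPolynomial (Fin n) ℝ, InSigma n d f ∧ r ≤ sosLength n d f) :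
    (interior {f : MvPolynomial.homogeneousSubmodule (Fin n) ℝ (2 * d) |
      InSigma n d (f : MvPolynomial (Fin n) ℝ) ∧
        sosLength n d (f : MvPolynomial (Fin n) ℝ) = r}).Nonempty :=
  typical_lengths_general n d r hint hlong
end
end

section
/- Let d ≥ 1. There exists a finite set Z ⊂ ℝ³ ∖ {0} of binom(d+1, 2) pairwise non-proportional points (i.e. binom(d+1,2) distinct points of the real projective plane) such that every form f of degree 2d in ℝ[x_1,x_2,x_3] that is a sum of squares of forms of degree d and vanishes at every point of Z has a unique sum of squares representation up to orthogonal equivalence: whenever f = p_1² + ⋯ + p_m² = q_1² + ⋯ + q_m² with p_i, q_i forms of degree d (representations of different lengths being padded with zeros to a common length m), there exists a real orthogonal m×m matrix u = (u_{ij}) with q_j = Σ_{i=1}^m u_{ij} p_i for all j. -/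
/-!
Take for `Z` the triangular grid `{(k, i, 1) : 0 ≤ i ≤ k < d}`. Setting `x₃ = 1` turns a form of
degree `d` vanishing on `Z` into a polynomial `f(x, y)` of total degree `≤ d` vanishing on the grid.
Restricting `f` to the line `x = d - 1` leaves a polynomial in `y` of degree `≤ d` with the roots
`0, …, d - 1`, hence a multiple of `y (y - 1) ⋯ (y - d + 1)`; what is left after subtracting the
corresponding multiple of that polynomial is divisible by `x - (d - 1)`. By induction these
polynomials form the `(d + 1)`-dimensional space spanned by
`β_j = (x - j) ⋯ (x - (d - 1)) · y (y - 1) ⋯ (y - j + 1)`, `0 ≤ j ≤ d`, and the same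
restrict-and-divide induction shows that the products `β_j β_k`, `j ≤ k`, are linearly independent.
So if `∑ pᵢ² = ∑ qᵢ²` with `pᵢ = ∑ Pᵢⱼ βⱼ` and `qᵢ = ∑ Qᵢⱼ βⱼ`, comparing coefficients gives
`Pᵀ P = Qᵀ Q`, and two matrices with the same Gram matrix differ by an orthogonal factor.
-/

open scoped InnerProductSpace Matrix

theorem LinearMap.exists_linearIsometryEquiv_apply_eq {𝕜 V W : Type*} [RCLike 𝕜]
    [AddCommGroup V] [Module 𝕜 V] [NormedAddCommGroup W] [InnerProductSpace 𝕜 W]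
    [FiniteDimensional 𝕜 W] {A B : V →ₗ[𝕜] W} (h : ∀ x, ‖A x‖ = ‖B x‖) :
    ∃ φ : W ≃ₗᵢ[𝕜] W, ∀ x, φ (A x) = B x := by
  have hker : LinearMap.ker A ≤ LinearMap.ker B := fun x hx => by
    rw [LinearMap.mem_ker, ← norm_eq_zero, ← h, hx, norm_zero]
  let L : LinearMap.range A →ₗ[𝕜] W :=
    (LinearMap.ker A).liftQ B hker ∘ₗ A.quotKerEquivRange.symm.toLinearMap
  have hL : ∀ x, L ⟨A x, LinearMap.mem_range_self A x⟩ = B x := fun x => by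
    simp [L, LinearMap.quotKerEquivRange_symm_apply_image]
  let Li : LinearMap.range A →ₗᵢ[𝕜] W :=
    { L with norm_map' := by rintro ⟨_, x, rfl⟩; exact (congrArg norm (hL x)).trans (h x).symm }
  exact ⟨Li.extend.toLinearIsometryEquiv rfl, fun x => (Li.extend_apply ⟨A x, _⟩).trans (hL x)⟩

theorem Matrix.exists_mem_unitaryGroup_mul_eq_of_conjTranspose_mul_self_eq {𝕜 m n : Type*}
    [RCLike 𝕜] [Fintype m] [DecidableEq m] [Fintype n] [DecidableEq n] {P Q : Matrix m n 𝕜}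
    (h : Pᴴ * P = Qᴴ * Q) : ∃ u ∈ Matrix.unitaryGroup m 𝕜, Q = u * P := by
  have norm_sq_eq (R : Matrix m n 𝕜) (x : EuclideanSpace 𝕜 n) :
      ‖toEuclideanLin R x‖ ^ 2 = RCLike.re ⟪x, toEuclideanLin (Rᴴ * R) x⟫_𝕜 := by
    rw [toLpLin_mul, toEuclideanLin_conjTranspose_eq_adjoint, LinearMap.comp_apply,
      LinearMap.adjoint_inner_right, inner_self_eq_norm_sq]
  obtain ⟨φ, hφ⟩ := LinearMap.exists_linearIsometryEquiv_apply_eq (A := toEuclideanLin P)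
    (B := toEuclideanLin Q) fun x => by
      rw [← sq_eq_sq₀ (norm_nonneg _) (norm_nonneg _), norm_sq_eq, norm_sq_eq, h]
  let b := (EuclideanSpace.basisFun m 𝕜).toBasis
  refine ⟨LinearMap.toMatrix b b φ.toLinearEquiv, φ.toMatrix_mem_unitaryGroup _ _, ?_⟩
  have hu : toEuclideanLin (LinearMap.toMatrix b b φ.toLinearEquiv) =
      φ.toLinearEquiv.toLinearMap :=
    Matrix.toLin_toMatrix b b _
  apply toEuclideanLin.injective
  rw [toLpLin_mul, hu]
  ext x : 1
  exact (hφ x).symm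

section SumOfSquares

variable {R A ι m : Type*} [CommRing R] [CommRing A] [Algebra R A] [Fintype ι] [Fintype m]

theorem sum_sq_sum_smul_eq (β : ι → A) (P : Matrix m ι R) :
    ∑ i, (∑ j, P i j • β j) ^ 2 = ∑ j, ∑ k, (Pᵀ * P) j k • (β j * β k) := by
  simp only [sq, Finset.sum_mul_sum, smul_mul_smul_comm, Matrix.mul_apply,
    Matrix.transpose_apply, Finset.sum_smul]
  rw [Finset.sum_comm]
  exact Finset.sum_congr rfl fun j _ => Finset.sum_comm

theorem transpose_mul_self_eq_of_sum_sq_eq {β : ι → A}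
    (hβ : ∀ C : Matrix ι ι R, C.IsSymm → ∑ j, ∑ k, C j k • (β j * β k) = 0 → C = 0)
    {P Q : Matrix m ι R} (h : ∑ i, (∑ j, P i j • β j) ^ 2 = ∑ i, (∑ j, Q i j • β j) ^ 2) :
    Pᵀ * P = Qᵀ * Q := by
  rw [← sub_eq_zero]
  refine hβ _ (by simp [Matrix.IsSymm, Matrix.transpose_mul]) ?_
  simp only [Matrix.sub_apply, sub_smul, Finset.sum_sub_distrib, ← sum_sq_sum_smul_eq, h,
    sub_self]

end SumOfSquares

theorem Matrix.IsSymm.sum_smul_mul_eq_of_castSucc_eq_mul {R A : Type*} [CommRing R] [CommRing A]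
    [Algebra R A] {n : ℕ} {M : Matrix (Fin (n + 1)) (Fin (n + 1)) R} (hM : M.IsSymm)
    {β : Fin (n + 1) → A} {ℓ : A} {u : Fin n → A} (hu : ∀ j, β j.castSucc = ℓ * u j) :
    ∑ j, ∑ k, M j k • (β j * β k) =
      ℓ * (ℓ * ∑ j, ∑ k, M j.castSucc k.castSucc • (u j * u k) +
          2 * ((∑ j, M j.castSucc (Fin.last n) • u j) * β (Fin.last n))) +
        M (Fin.last n) (Fin.last n) • (β (Fin.last n) * β (Fin.last n)) := by
  have inner :
      ∑ j : Fin n, ∑ k : Fin n, M j.castSucc k.castSucc • (β j.castSucc * β k.castSucc) =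
        ℓ * (ℓ * ∑ j, ∑ k, M j.castSucc k.castSucc • (u j * u k)) := by
    simp only [hu, Finset.mul_sum, Algebra.smul_def]
    exact Finset.sum_congr rfl fun _ _ => Finset.sum_congr rfl fun _ _ => by ring
  have column : ∑ j : Fin n, M j.castSucc (Fin.last n) • (β j.castSucc * β (Fin.last n)) =
      ℓ * ((∑ j, M j.castSucc (Fin.last n) • u j) * β (Fin.last n)) := by
    simp only [hu, Finset.mul_sum, Finset.sum_mul, Algebra.smul_def]
    exact Finset.sum_congr rfl fun _ _ => by ring
  have row : ∑ k : Fin n, M (Fin.last n) k.castSucc • (β (Fin.last n) * β k.castSucc) =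
      ∑ j : Fin n, M j.castSucc (Fin.last n) • (β j.castSucc * β (Fin.last n)) :=
    Finset.sum_congr rfl fun k _ => by rw [hM.apply, mul_comm]
  simp only [Fin.sum_univ_castSucc, Finset.sum_add_distrib]
  rw [inner, row, column]
  ring

theorem Matrix.IsSymm.eq_zero_of_submatrix_castSucc {R : Type*} [Zero R] {n : ℕ}
    {M : Matrix (Fin (n + 1)) (Fin (n + 1)) R} (hM : M.IsSymm)
    (hsub : M.submatrix Fin.castSucc Fin.castSucc = 0)
    (hcol : ∀ j : Fin n, M j.castSucc (Fin.last n) = 0) (hlast : M (Fin.last n) (Fin.last n) = 0) :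
    M = 0 := by
  ext j k
  induction j using Fin.lastCases with
  | last =>
    induction k using Fin.lastCases with
    | last => exact hlast
    | cast k => rw [hM.apply]; exact hcol k
  | cast j =>
    induction k using Fin.lastCases with
    | last => exact hcol j
    | cast k => exact congrFun₂ hsub j k

theorem exists_mem_orthogonalGroup_of_sum_sq_eq {A ι m : Type*} [CommRing A] [Algebra ℝ A]
    [Fintype ι] [DecidableEq ι] [Fintype m] [DecidableEq m] {β : ι → A}
    (hβ : ∀ C : Matrix ι ι ℝ, C.IsSymm → ∑ j, ∑ k, C j k • (β j * β k) = 0 → C = 0)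
    {P Q : Matrix m ι ℝ} (h : ∑ i, (∑ j, P i j • β j) ^ 2 = ∑ i, (∑ j, Q i j • β j) ^ 2) :
    ∃ u ∈ Matrix.orthogonalGroup m ℝ, ∀ k, ∑ j, Q k j • β j = ∑ i, u k i • ∑ j, P i j • β j := by
  obtain ⟨u, hu, hQ⟩ := Matrix.exists_mem_unitaryGroup_mul_eq_of_conjTranspose_mul_self_eq
    (transpose_mul_self_eq_of_sum_sq_eq hβ h)
  refine ⟨u, hu, fun k => ?_⟩
  simp only [hQ, Matrix.mul_apply, Finset.sum_smul, Finset.smul_sum, smul_smul]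
  exact Finset.sum_comm

theorem MvPolynomial.IsHomogeneous.eval_smul {σ R : Type*} [CommSemiring R] [Fintype σ]
    {φ : MvPolynomial σ R} {n : ℕ} (hφ : φ.IsHomogeneous n) (c : R) (x : σ → R) :
    MvPolynomial.eval (c • x) φ = c ^ n * MvPolynomial.eval x φ := by
  simp only [MvPolynomial.eval_eq', Finset.mul_sum, Pi.smul_apply, smul_eq_mul, mul_pow,
    Finset.prod_mul_distrib, Finset.prod_pow_eq_pow_sum]
  refine Finset.sum_congr rfl fun m hm => ?_
  rw [← Finsupp.degree_eq_sum, Finsupp.degree_eq_weight_one, ← Pi.one_def,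
    hφ (MvPolynomial.mem_support_iff.mp hm)]
  ring

noncomputable section

open Polynomial
open scoped Polynomial.Bivariate

theorem Polynomial.eq_C_mul_descPochhammer_of_eval_eq_zero {K : Type*} [Field K] [CharZero K]
    {p : K[X]} {n : ℕ} (hp : p.natDegree ≤ n) (h : ∀ i < n, p.eval (i : K) = 0) :
    p = C (p.coeff n) * descPochhammer K n := by
  rw [← sub_eq_zero]
  refine eq_zero_of_degree_lt_of_eval_finset_eq_zero ((Finset.range n).map Nat.castEmbedding)
    ?_ ?_
  · rw [Finset.card_map, Finset.card_range, degree_lt_iff_coeff_zero]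
    intro k hk
    rcases hk.lt_or_eq with hk | rfl
    · rw [coeff_sub, coeff_eq_zero_of_natDegree_lt (hp.trans_lt hk), coeff_C_mul,
        coeff_eq_zero_of_natDegree_lt (p := descPochhammer K n)
          (by rwa [descPochhammer_natDegree]), mul_zero, sub_zero]
    · have hlead := (monic_descPochhammer K n).coeff_natDegree
      rw [descPochhammer_natDegree] at hlead
      rw [coeff_sub, coeff_C_mul, hlead, mul_one, sub_self]
  · simp only [Finset.mem_map, Finset.mem_range, Nat.castEmbedding_apply, forall_exists_index,
      and_imp]
    rintro _ i hi rfl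
    rw [eval_sub, h i hi, eval_C_mul, descPochhammer_eval_coe_nat_of_lt hi, mul_zero, sub_zero]

theorem Polynomial.linearIndependent_descPochhammer (K : Type*) [Field K] :
    LinearIndependent K (descPochhammer K) :=
  Sequence.linearIndependent
    ⟨descPochhammer K, fun n => by
      rw [degree_eq_natDegree (monic_descPochhammer K n).ne_zero, descPochhammer_natDegree]⟩

namespace Polynomial.Bivariate

section TotalDegree

variable (R : Type*) [Semiring R]

def totalDegreeLE (n : ℕ) : Submodule R R[X][Y] where
  carrier := {f | ∀ b, f.coeff b ≠ 0 → (f.coeff b).natDegree + b ≤ n}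
  add_mem' {f g} hf hg b hb := by
    rw [coeff_add] at hb ⊢
    by_cases hf0 : f.coeff b = 0
    · rw [hf0, zero_add] at hb ⊢
      exact hg b hb
    by_cases hg0 : g.coeff b = 0
    · rw [hg0, add_zero] at hb ⊢
      exact hf b hf0
    have := natDegree_add_le (f.coeff b) (g.coeff b)
    have := hf b hf0
    have := hg b hg0
    omega
  zero_mem' b hb := absurd (coeff_zero b) hb
  smul_mem' c f hf b hb := by
    rw [coeff_smul] at hb ⊢
    have := hf b fun h => hb (by rw [h, smul_zero])
    have := natDegree_smul_le c (f.coeff b)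
    omega

variable {R}

theorem totalDegreeLE_mono {m n : ℕ} (h : m ≤ n) : totalDegreeLE R m ≤ totalDegreeLE R n :=
  fun _ hf b hb => (hf b hb).trans h

theorem C_mul_X_pow_mem_totalDegreeLE (p : R[X]) (k : ℕ) :
    C p * Y ^ k ∈ totalDegreeLE R (p.natDegree + k) := by
  intro b hb
  rw [coeff_C_mul_X_pow] at hb ⊢
  split_ifs at hb ⊢ with h
  · rw [h]
  · exact absurd rfl hb

theorem map_C_mem_totalDegreeLE {p : R[X]} {n : ℕ} (hp : p.natDegree ≤ n) :
    p.map C ∈ totalDegreeLE R n := by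
  intro b hb
  rw [coeff_map, natDegree_C, zero_add]
  exact (le_natDegree_of_ne_zero fun h => hb (by rw [coeff_map, h, map_zero])).trans hp

theorem natDegree_map_le_of_mem_totalDegreeLE {S : Type*} [Semiring S] (φ : R[X] →+* S)
    {f : R[X][Y]} {n : ℕ} (hf : f ∈ totalDegreeLE R n) : (f.map φ).natDegree ≤ n := by
  refine natDegree_le_iff_coeff_eq_zero.mpr fun b hb => ?_
  rw [coeff_map]
  by_contra h
  have := hf b fun h0 => h (by rw [h0, map_zero])
  omega

theorem eq_CC_of_mem_totalDegreeLE_zero {f : R[X][Y]} (hf : f ∈ totalDegreeLE R 0) :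
    f = CC ((f.coeff 0).coeff 0) := by
  ext b : 1
  rcases Nat.eq_zero_or_pos b with rfl | hb
  · by_cases h0 : f.coeff 0 = 0
    · simp [h0]
    · rw [coeff_C_zero, eq_C_of_natDegree_eq_zero (p := f.coeff 0) (by have := hf 0 h0; omega)]
      simp
  · rw [coeff_C, if_neg hb.ne']
    by_contra h
    have := hf b h
    omega

theorem mem_totalDegreeLE_of_C_mul_mem [IsDomain R] {p : R[X]} (hp : p ≠ 0) {f : R[X][Y]}
    {n : ℕ} (h : C p * f ∈ totalDegreeLE R (n + p.natDegree)) : f ∈ totalDegreeLE R n := by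
  intro b hb
  have := h b (by rw [coeff_C_mul]; exact mul_ne_zero hp hb)
  rw [coeff_C_mul, natDegree_mul hp hb] at this
  omega

end TotalDegree

theorem C_X_sub_C_dvd_of_map_evalRingHom_eq_zero {R : Type*} [CommRing R]
    {f : R[X][Y]} {r : R} (h : f.map (evalRingHom r) = 0) : C (X - C r) ∣ f := by
  rw [C_dvd_iff_dvd_coeff]
  intro b
  rw [dvd_iff_isRoot]
  simpa using congrArg (coeff · b) h

theorem map_evalRingHom_smul {R : Type*} [CommRing R] (r c : R)
    (f : R[X][Y]) : (c • f).map (evalRingHom r) = c • f.map (evalRingHom r) := by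
  rw [Algebra.smul_def, Algebra.smul_def, Polynomial.map_mul]
  simp

section Dehomogenize
variable {R : Type*} [CommRing R]

def dehomogenize : MvPolynomial (Fin 3) R →ₐ[R] R[X][Y] :=
  MvPolynomial.aeval ![C X, Y, 1]

theorem evalEval_dehomogenize (x y : R) (f : MvPolynomial (Fin 3) R) :
    (dehomogenize f).evalEval x y = MvPolynomial.eval ![x, y, 1] f := by
  induction f using MvPolynomial.induction_on with
  | C r => simp [dehomogenize]
  | add f g hf hg => simp [hf, hg]
  | mul_X f i hf =>
    rw [map_mul, evalEval_mul, hf, map_mul]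
    fin_cases i <;> simp [dehomogenize, evalEval_C]

theorem dehomogenize_monomial (m : Fin 3 →₀ ℕ) (r : R) :
    dehomogenize (MvPolynomial.monomial m r) = C (C r * X ^ m 0) * Y ^ m 1 := by
  simp [dehomogenize, MvPolynomial.aeval_monomial, Finsupp.prod_fintype, Fin.prod_univ_three]
  ring

theorem dehomogenize_mem_totalDegreeLE {f : MvPolynomial (Fin 3) R} {n : ℕ}
    (hf : f.IsHomogeneous n) : dehomogenize f ∈ totalDegreeLE R n := by
  rw [f.as_sum, map_sum]
  refine Submodule.sum_mem _ fun m hm => ?_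
  have hm : m.degree = n := by
    rw [Finsupp.degree_eq_weight_one]
    exact hf (MvPolynomial.mem_support_iff.mp hm)
  rw [Finsupp.degree_eq_sum, Fin.sum_univ_three] at hm
  rw [dehomogenize_monomial]
  refine totalDegreeLE_mono ?_ (C_mul_X_pow_mem_totalDegreeLE _ _)
  have := natDegree_C_mul_X_pow_le (MvPolynomial.coeff m f) (m 0)
  omega

theorem eval_eq_pow_mul_evalEval_dehomogenize {K : Type*} [Field K]
    {f : MvPolynomial (Fin 3) K} {n : ℕ} (hf : f.IsHomogeneous n) {x : Fin 3 → K} (hx : x 2 ≠ 0) :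
    MvPolynomial.eval x f = x 2 ^ n * (dehomogenize f).evalEval (x 0 / x 2) (x 1 / x 2) := by
  rw [evalEval_dehomogenize, ← hf.eval_smul]
  congr
  ext i
  fin_cases i <;> simp [mul_div_cancel₀ _ hx]

theorem eq_of_dehomogenize_eq {K : Type*} [Field K] [Infinite K]
    {f g : MvPolynomial (Fin 3) K} {n : ℕ} (hf : f.IsHomogeneous n) (hg : g.IsHomogeneous n)
    (h : dehomogenize f = dehomogenize g) : f = g := by
  refine mul_left_cancel₀ (MvPolynomial.X_ne_zero 2) <|
    ((MvPolynomial.isHomogeneous_X K 2).mul hf).funext ((MvPolynomial.isHomogeneous_X K 2).mul hg)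
      fun x => ?_
  by_cases hx : x 2 = 0
  · simp [hx]
  · simp only [map_mul, eval_eq_pow_mul_evalEval_dehomogenize hf hx,
      eval_eq_pow_mul_evalEval_dehomogenize hg hx, h]

end Dehomogenize

end Polynomial.Bivariate

namespace TriangularGrid

open Polynomial.Bivariate

variable {K : Type*} [Field K]

def basis (d j : ℕ) : K[X][Y] :=
  C (∏ k ∈ Finset.Ico j d, (X - C (k : K))) * (descPochhammer K j).map C

theorem basis_self (d : ℕ) : basis d d = (descPochhammer K d).map C := by
  simp [basis]

theorem basis_succ {d j : ℕ} (hj : j ≤ d) :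
    basis (d + 1) j = C (X - C (d : K)) * basis d j := by
  rw [basis, basis, Finset.prod_Ico_succ_top hj, map_mul, mul_comm (C _) (C (X - _)), mul_assoc]

theorem map_basis (d j : ℕ) (r : K) :
    (basis d j).map (evalRingHom r) =
      C (∏ k ∈ Finset.Ico j d, (r - k)) * descPochhammer K j := by
  have hC : (evalRingHom r).comp C = RingHom.id K := RingHom.ext fun _ => eval_C
  rw [basis, Polynomial.map_mul, map_C, Polynomial.map_map, hC, Polynomial.map_id,
    coe_evalRingHom, eval_prod]
  simp

abbrev Index (d : ℕ) : Type := Σ k : Fin d, Fin (k + 1)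

theorem card_index (d : ℕ) : Fintype.card (Index d) = (d + 1).choose 2 := by
  rw [Fintype.card_sigma]
  simp only [Fintype.card_fin]
  rw [Fin.sum_univ_eq_sum_range (· + 1) d]
  induction d with
  | zero => rfl
  | succ d ih =>
    rw [Finset.sum_range_succ, ih, Nat.choose_succ_succ (d + 1) 1, Nat.choose_one_right, add_comm]

variable (K) in
def point {d : ℕ} (s : Index d) : Fin 3 → K := ![((s.1 : ℕ) : K), ((s.2 : ℕ) : K), 1]

theorem point_ne_zero {d : ℕ} (s : Index d) : point K s ≠ 0 :=
  fun h => one_ne_zero (congrFun h 2)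

def VanishesOn (d : ℕ) (f : K[X][Y]) : Prop :=
  ∀ k i : ℕ, i ≤ k → k < d → f.evalEval (k : K) (i : K) = 0

variable [CharZero K]

theorem point_ne_smul {d : ℕ} {s t : Index d} (hst : s ≠ t) (c : K) :
    point K s ≠ c • point K t := by
  intro h
  have hc : c = 1 := by simpa [point] using (congrFun h 2).symm
  subst hc
  rw [one_smul] at h
  have h0 : (s.1 : ℕ) = t.1 := by simpa [point] using congrFun h 0
  have h1 : (s.2 : ℕ) = t.2 := by simpa [point] using congrFun h 1
  exact hst (Sigma.ext (Fin.ext h0) ((Fin.heq_ext_iff (by rw [Fin.ext h0])).mpr h1))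

theorem exists_eq_C_mul_add_smul_basis {d : ℕ} {f : K[X][Y]}
    (hf : f ∈ totalDegreeLE K (d + 1)) (hvan : VanishesOn (d + 1) f) :
    ∃ (c : K) (f₁ : K[X][Y]), f₁ ∈ totalDegreeLE K d ∧ VanishesOn d f₁ ∧
      f = C (X - C (d : K)) * f₁ + c • basis (d + 1) (d + 1) := by
  set g := f.map (evalRingHom (d : K))
  have hg : g = C (g.coeff (d + 1)) * descPochhammer K (d + 1) :=
    eq_C_mul_descPochhammer_of_eval_eq_zero (natDegree_map_le_of_mem_totalDegreeLE _ hf)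
      fun i hi => by rw [map_evalRingHom_eval]; exact hvan d i (by omega) (by omega)
  set c := g.coeff (d + 1)
  have hβ : basis (d + 1) (d + 1) = (descPochhammer K (d + 1)).map C := basis_self _
  obtain ⟨f₁, hf₁⟩ : C (X - C (d : K)) ∣ f - c • basis (d + 1) (d + 1) := by
    refine C_X_sub_C_dvd_of_map_evalRingHom_eq_zero ?_
    rw [Polynomial.map_sub, map_evalRingHom_smul, map_basis, Finset.Ico_self, Finset.prod_empty,
      map_one, one_mul, smul_eq_C_mul, ← hg, sub_self]
  refine ⟨c, f₁, ?_, fun k i hik hk => ?_, by rw [← hf₁, sub_add_cancel]⟩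
  · refine mem_totalDegreeLE_of_C_mul_mem (X_sub_C_ne_zero (d : K)) ?_
    rw [natDegree_X_sub_C, ← hf₁, hβ]
    exact sub_mem hf (Submodule.smul_mem _ _
      (map_C_mem_totalDegreeLE (descPochhammer_natDegree K _).le))
  · have hk' : (k : K) - d ≠ 0 := sub_ne_zero.mpr (Nat.cast_injective.ne hk.ne)
    have := congrArg (evalEval (k : K) (i : K)) hf₁
    rw [evalEval_sub, evalEval_smul, hvan k i hik (by omega), hβ, evalEval_map_C,
      descPochhammer_eval_coe_nat_of_lt (by omega), smul_zero, sub_zero, evalEval_mul,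
      evalEval_C] at this
    simpa [hk'] using this.symm

theorem exists_eq_sum_basis {d : ℕ} {f : K[X][Y]} (hf : f ∈ totalDegreeLE K d)
    (hvan : VanishesOn d f) : ∃ c : Fin (d + 1) → K, f = ∑ j, c j • basis d j := by
  induction d generalizing f with
  | zero =>
    refine ⟨fun _ => (f.coeff 0).coeff 0, ?_⟩
    rw [eq_CC_of_mem_totalDegreeLE_zero hf]
    simp [basis, Algebra.smul_def]
  | succ d ih =>
    obtain ⟨c, f₁, hf₁, hvan₁, rfl⟩ := exists_eq_C_mul_add_smul_basis hf hvan
    obtain ⟨c₁, rfl⟩ := ih hf₁ hvan₁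
    refine ⟨Fin.snoc c₁ c, ?_⟩
    conv_rhs => rw [Fin.sum_univ_castSucc, Fin.snoc_last, Fin.val_last]
    rw [Finset.mul_sum]
    congr 1
    refine Finset.sum_congr rfl fun j _ => ?_
    rw [Fin.snoc_castSucc, Fin.val_castSucc, basis_succ j.is_le, mul_smul_comm]

theorem eq_zero_of_map_sum_smul_basis_eq_zero {d : ℕ} {a : Fin (d + 1) → K}
    (h : (∑ j, a j • basis d j).map (evalRingHom (d : K)) = 0) : a = 0 := by
  simp only [Polynomial.map_sum, map_evalRingHom_smul, map_basis, ← smul_eq_C_mul, smul_smul]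
    at h
  have hli :=
    (linearIndependent_descPochhammer K).comp (Fin.val : Fin (d + 1) → ℕ) Fin.val_injective
  funext j
  have hj := Fintype.linearIndependent_iff.mp hli _ h j
  refine (mul_eq_zero.mp hj).resolve_right (Finset.prod_ne_zero_iff.mpr fun k hk => ?_)
  exact sub_ne_zero.mpr (Nat.cast_injective.ne (Finset.mem_Ico.mp hk).2.ne')

theorem eq_zero_of_sum_smul_basis_mul_basis_eq_zero {d : ℕ}
    (M : Matrix (Fin (d + 1)) (Fin (d + 1)) K) (hM : M.IsSymm)
    (h : ∑ j, ∑ k, M j k • (basis d j * basis d k : K[X][Y]) = 0) : M = 0 := by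
  induction d with
  | zero =>
    ext j k
    fin_cases j; fin_cases k
    simpa [basis] using h
  | succ d ih =>
    set ℓ : K[X][Y] := C (X - C (d : K))
    have hℓ : ℓ.map (evalRingHom (d : K)) = 0 := by simp [ℓ]
    have hℓ0 : ℓ ≠ 0 := C_ne_zero.mpr (X_sub_C_ne_zero _)
    have hγ : (basis (d + 1) (d + 1) : K[X][Y]).map (evalRingHom (d : K)) =
        descPochhammer K (d + 1) := by simp [map_basis]
    have hγ0 : descPochhammer K (d + 1) ≠ 0 := (monic_descPochhammer K _).ne_zero
    rw [hM.sum_smul_mul_eq_of_castSucc_eq_mul (u := fun j => basis d j)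
      fun j => basis_succ j.is_le] at h
    -- on the line `x = d` every term containing `ℓ` vanishes
    have hlast : M (Fin.last _) (Fin.last _) = 0 := by
      have := congrArg (Polynomial.map (evalRingHom (d : K))) h
      simpa [hℓ, hγ, map_evalRingHom_smul, hγ0] using this
    rw [hlast, zero_smul, add_zero] at h
    have h' := (mul_eq_zero.mp h).resolve_left hℓ0
    have hcol : (fun j : Fin (d + 1) => M j.castSucc (Fin.last _)) = 0 := by
      refine eq_zero_of_map_sum_smul_basis_eq_zero ?_
      have := congrArg (Polynomial.map (evalRingHom (d : K))) h'
      simpa [hℓ, hγ, hγ0] using this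
    have hS : ∑ j : Fin (d + 1), ∑ k : Fin (d + 1),
        M j.castSucc k.castSucc • (basis d j * basis d k : K[X][Y]) = 0 := by
      have hT : ∑ j : Fin (d + 1), M j.castSucc (Fin.last _) • (basis d j : K[X][Y]) = 0 :=
        Finset.sum_eq_zero fun j _ => by rw [congrFun hcol j, Pi.zero_apply, zero_smul]
      rw [hT, zero_mul, mul_zero, add_zero] at h'
      exact (mul_eq_zero.mp h').resolve_left hℓ0
    exact hM.eq_zero_of_submatrix_castSucc (ih _ (hM.submatrix _) hS) (congrFun hcol) hlast

theorem exists_dehomogenize_eq_sum_basis {d : ℕ} {f : MvPolynomial (Fin 3) K}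
    (hf : f.IsHomogeneous d) (hz : ∀ s : Index d, MvPolynomial.eval (point K s) f = 0) :
    ∃ c : Fin (d + 1) → K, dehomogenize f = ∑ j, c j • basis d j :=
  exists_eq_sum_basis (dehomogenize_mem_totalDegreeLE hf) fun k i hik hk => by
    rw [evalEval_dehomogenize]
    exact hz ⟨⟨k, hk⟩, ⟨i, Nat.lt_succ_of_le hik⟩⟩

theorem exists_matrix_dehomogenize_eq_sum_basis {d : ℕ} {ι : Type*} [Fintype ι]
    {p : ι → MvPolynomial (Fin 3) ℝ} (hp : ∀ i, (p i).IsHomogeneous d)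
    (hz : ∀ s : Index d, MvPolynomial.eval (point ℝ s) (∑ i, p i ^ 2) = 0) :
    ∃ P : Matrix ι (Fin (d + 1)) ℝ,
      ∀ i, dehomogenize (p i) = ∑ j, P i j • basis d j := by
  choose P hP using fun i => exists_dehomogenize_eq_sum_basis (hp i) fun s => by
    have := hz s
    rw [map_sum, Finset.sum_eq_zero_iff_of_nonneg fun i _ => by rw [map_pow]; exact sq_nonneg _]
      at this
    simpa using this i (Finset.mem_univ _)
  exact ⟨Matrix.of P, hP⟩

end TriangularGrid

end

open MvPolynomial

theorem unique_representation_on_general_points_general (d : ℕ) :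
    ∃ z : Fin ((d + 1).choose 2) → (Fin 3 → ℝ),
      (∀ j, z j ≠ 0) ∧
      (∀ j k, j ≠ k → ∀ c : ℝ, z j ≠ c • z k) ∧
      ∀ (m : ℕ) (p q : Fin m → MvPolynomial (Fin 3) ℝ),
        (∀ i, (p i).IsHomogeneous d) → (∀ i, (q i).IsHomogeneous d) →
        (∑ i, p i ^ 2 = ∑ i, q i ^ 2) →
        (∀ j, eval (z j) (∑ i, p i ^ 2) = 0) →
        ∃ u : Matrix (Fin m) (Fin m) ℝ, u * u.transpose = 1 ∧
          ∀ k, q k = ∑ i, u i k • p i := by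
  let e := Fintype.equivFinOfCardEq (TriangularGrid.card_index d)
  refine ⟨fun j => TriangularGrid.point ℝ (e.symm j), fun j => TriangularGrid.point_ne_zero _,
    fun j k hjk => TriangularGrid.point_ne_smul (e.symm.injective.ne hjk), ?_⟩
  intro m p q hp hq hpq hvan
  have hvan_p : ∀ s, eval (TriangularGrid.point ℝ s) (∑ i, p i ^ 2) = 0 := fun s => by
    simpa using hvan (e s)
  obtain ⟨P, hP⟩ := TriangularGrid.exists_matrix_dehomogenize_eq_sum_basis hp hvan_p
  obtain ⟨Q, hQ⟩ := TriangularGrid.exists_matrix_dehomogenize_eq_sum_basis hq (hpq ▸ hvan_p)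
  obtain ⟨u, hu, hqp⟩ := exists_mem_orthogonalGroup_of_sum_sq_eq
    TriangularGrid.eq_zero_of_sum_smul_basis_mul_basis_eq_zero (P := P) (Q := Q)
    (by simpa only [map_sum, map_pow, hP, hQ] using
      congrArg Polynomial.Bivariate.dehomogenize hpq)
  have hom : ∀ k, (∑ i, u k i • p i).IsHomogeneous d := fun k =>
    Submodule.sum_mem (homogeneousSubmodule (Fin 3) ℝ d) fun i _ => Submodule.smul_mem _ _ (hp i)
  refine ⟨uᵀ, by rw [Matrix.transpose_transpose]; exact (Matrix.mem_orthogonalGroup_iff' _ _).mp hu,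
    fun k => Polynomial.Bivariate.eq_of_dehomogenize_eq (hq k) (hom k) ?_⟩
  simp only [hQ, hqp, map_sum, map_smul, hP, Matrix.transpose_apply]

/-- There is a set `Z` of `binom(d+1,2)` points of the real projective plane
(given by pairwise non-proportional nonzero vectors in `ℝ³`) such that every sum
of squares of degree-`d` forms vanishing on `Z` has a unique sum of squares
representation up to orthogonal equivalence. -/
theorem unique_representation_on_general_points (d : ℕ) (hd : 1 ≤ d) :
    ∃ z : Fin ((d + 1).choose 2) → (Fin 3 → ℝ),
      (∀ j, z j ≠ 0) ∧
      (∀ j k, j ≠ k → ∀ c : ℝ, z j ≠ c • z k) ∧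
      ∀ (m : ℕ) (p q : Fin m → MvPolynomial (Fin 3) ℝ),
        (∀ i, (p i).IsHomogeneous d) → (∀ i, (q i).IsHomogeneous d) →
        (∑ i, p i ^ 2 = ∑ i, q i ^ 2) →
        (∀ j, eval (z j) (∑ i, p i ^ 2) = 0) →
        ∃ u : Matrix (Fin m) (Fin m) ℝ, u * u.transpose = 1 ∧
          ∀ k, q k = ∑ i, u i k • p i :=
  unique_representation_on_general_points_general d
end

section
/- For every d ≥ 2 there exists a form f of degree 2d in ℝ[x_1,x_2,x_3] that is a sum of squares of forms of degree d but is not a sum of d squares of forms of degree d; i.e., ℓ(f) ≥ d+1. Consequently p(3,2d) ≥ d + 1. -/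
open MvPolynomial

noncomputable section

/-!
Let `Q_k = ∏_{i<k} (x - i z) · ∏_{j<d-k} (y - j z)` for `k ≤ d` and `f = ∑ₖ Q_k²`. Setting
`z = 1` turns `Q_k` into `q_k = x^{(k)} y^{(d-k)}` (falling factorials), and every `q_k` vanishes
on the lattice triangle `{(a, b) ∈ ℕ² : a + b < d}`. If `f = ∑ⱼ p_j²` with forms `p_j` of degree
`d`, the dehomogenized `p_j` have degree `≤ d` and, by positivity, vanish on the triangle as well.
The falling-factorial monomials `x^{(a)} y^{(b)}` are a basis that is triangular for evaluation at
lattice points, which forces every `p_j` into the span of the `q_k`: `p_j = ∑ₖ C_{jk} q_k`.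
Evaluating at the points `(l, d - k)` shows that the products `q_k q_l` (`k ≤ l`) are linearly
independent, so comparing `∑ⱼ p_j² = ∑ₖ q_k²` gives `Cᵀ C = 1`, an identity matrix of size
`d + 1`; its rank is at most the number `r` of rows of `C`.
-/

open Matrix

theorem Matrix.eq_zero_of_isSymm_of_forall_Icc {K : Type*} [CommRing K] [IsDomain K] [CharZero K]
    {m : ℕ} {M : Matrix (Fin m) (Fin m) K} (hM : M.IsSymm)
    (h : ∀ k l : Fin m, k ≤ l →
      ∃ v : Fin m → K, (∀ t, v t ≠ 0 ↔ t ∈ Set.Icc k l) ∧ v ⬝ᵥ M *ᵥ v = 0) :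
    M = 0 := by
  have hsymm : ∀ s t, M s t = M t s := fun s t => hM.apply t s
  suffices key : ∀ n : ℕ, ∀ k l : Fin m, k ≤ l → (l : ℕ) - k < n → M k l = 0 by
    ext s t
    rcases le_total s t with hst | hts
    · exact key _ s t hst (Nat.lt_succ_self _)
    · rw [hsymm]; exact key _ t s hts (Nat.lt_succ_self _)
  intro n
  induction n with
  | zero => intro k l _ h; omega
  | succ n ih =>
    intro k l hkl hn
    obtain ⟨v, hv, hvM⟩ := h k l hkl
    have hvk : v k ≠ 0 := (hv k).2 ⟨le_rfl, hkl⟩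
    have hvl : v l ≠ 0 := (hv l).2 ⟨hkl, le_rfl⟩
    -- every pair in `[k, l]` other than the two corners is strictly closer than `k` and `l`
    have hcorner : ∀ s t, (s, t) ≠ (k, l) → (s, t) ≠ (l, k) → v s * M s t * v t = 0 := by
      intro s t h1 h2
      by_cases hs : v s = 0
      · simp [hs]
      by_cases ht : v t = 0
      · simp [ht]
      obtain ⟨hks, hsl⟩ := (hv s).1 hs
      obtain ⟨hkt, htl⟩ := (hv t).1 ht
      simp only [Ne, Prod.mk.injEq, Fin.ext_iff] at h1 h2
      rw [Fin.le_def] at hks hsl hkt htl hkl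
      have hM0 : M s t = 0 := by
        rcases le_total s t with hst | hts
        · exact ih s t hst (by rw [Fin.le_def] at hst; omega)
        · rw [hsymm]; exact ih t s hts (by rw [Fin.le_def] at hts; omega)
      simp [hM0]
    have hexpand : v ⬝ᵥ M *ᵥ v = ∑ st : Fin m × Fin m, v st.1 * M st.1 st.2 * v st.2 := by
      simp only [dotProduct, mulVec, Finset.mul_sum, Fintype.sum_prod_type]
      ring_nf
    rw [hexpand] at hvM
    rcases eq_or_ne k l with rfl | hne
    · rw [Fintype.sum_eq_single (k, k) fun st hst => hcorner _ _ hst hst] at hvM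
      simpa [hvk] using hvM
    · rw [Fintype.sum_eq_add (k, l) (l, k) (by simp [hne])
        (fun st hst => hcorner _ _ hst.1 hst.2), hsymm l k] at hvM
      have : (2 : K) * (v k * v l) * M k l = 0 := by linear_combination hvM
      simpa [hvk, hvl] using this

theorem le_of_sum_sq_eq_sum_sq {K A : Type*} [Field K] [CommRing A] [Algebra K A] {m r : ℕ}
    {q : Fin m → A}
    (hq : ∀ M : Matrix (Fin m) (Fin m) K, M.IsSymm → ∑ s, ∑ t, M s t • (q s * q t) = 0 → M = 0)
    {u : Fin r → A} (hu : ∀ j, u j ∈ Submodule.span K (Set.range q))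
    (h : ∑ j, u j ^ 2 = ∑ k, q k ^ 2) : m ≤ r := by
  choose C hC using fun j => (Submodule.mem_span_range_iff_exists_fun K).mp (hu j)
  set G : Matrix (Fin m) (Fin m) K := (of C)ᵀ * of C
  have hG : G = 1 := by
    rw [← sub_eq_zero]
    refine hq _ (by simp [G, IsSymm, transpose_mul]) ?_
    have hexpand : ∑ s, ∑ t, G s t • (q s * q t) = ∑ j, u j ^ 2 := by
      simp only [G, mul_apply, transpose_apply, of_apply, Finset.sum_smul, ← hC, sq,
        Finset.sum_mul_sum, smul_mul_smul_comm]
      exact (Finset.sum_congr rfl fun s _ => Finset.sum_comm).trans Finset.sum_comm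
    have hone : ∑ s, ∑ t, (1 : Matrix (Fin m) (Fin m) K) s t • (q s * q t) = ∑ k, q k ^ 2 := by
      simp [one_apply, sq]
    simp only [Matrix.sub_apply, sub_smul, Finset.sum_sub_distrib, hexpand, hone, h, sub_self]
  calc m = (1 : Matrix (Fin m) (Fin m) K).rank := by simp [rank_one]
    _ = G.rank := by rw [hG]
    _ ≤ (of C).rank := rank_mul_le_right _ _
    _ ≤ r := by simpa using rank_le_card_height (of C)

theorem MvPolynomial.eval_eq_zero_of_sum_sq_eq {σ ι R : Type*} [CommRing R] [LinearOrder R]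
    [IsStrictOrderedRing R] [Fintype ι] {u : ι → MvPolynomial σ R} {g : MvPolynomial σ R}
    (h : ∑ j, u j ^ 2 = g) {x : σ → R} (hx : eval x g = 0) (j : ι) : eval x (u j) = 0 := by
  rw [← h, map_sum] at hx
  simp only [map_pow] at hx
  exact pow_eq_zero_iff two_ne_zero |>.mp
    ((Finset.sum_eq_zero_iff_of_nonneg fun j _ => sq_nonneg _).mp hx j (Finset.mem_univ j))

theorem Polynomial.X_pow_mem_span_descPochhammer (R : Type*) [Ring R] [Nontrivial R]
    [NoZeroDivisors R] (n : ℕ) :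
    (Polynomial.X : Polynomial R) ^ n ∈ Submodule.span R (descPochhammer R '' Set.Iic n) := by
  let S : Polynomial.Sequence R :=
    ⟨descPochhammer R, fun i => by
      rw [Polynomial.degree_eq_natDegree (monic_descPochhammer R i).ne_zero,
        descPochhammer_natDegree]⟩
  have hspan := S.span_degreeLE (m := n) fun i _ => by
    simp [S, (monic_descPochhammer R i).leadingCoeff]
  rw [show (S : ℕ → Polynomial R) = descPochhammer R from rfl] at hspan
  rw [hspan, Polynomial.mem_degreeLE]
  exact Polynomial.degree_X_pow_le n

theorem MvPolynomial.eval_polynomial_aeval_X {σ R : Type*} [CommRing R] (x : σ → R) (i : σ)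
    (P : Polynomial R) : eval x (Polynomial.aeval (X i) P) = P.eval (x i) := by
  change aeval x _ = _
  rw [← Polynomial.aeval_algHom_apply, aeval_X, Polynomial.coe_aeval_eq_eval]

theorem MvPolynomial.totalDegree_aeval_le {σ τ R : Type*} [CommSemiring R]
    {g : σ → MvPolynomial τ R} (hg : ∀ i, (g i).totalDegree ≤ 1) (p : MvPolynomial σ R) :
    (aeval g p).totalDegree ≤ p.totalDegree := by
  conv_lhs => rw [p.as_sum]
  rw [map_sum]
  refine totalDegree_finsetSum_le fun m hm => ?_
  rw [aeval_monomial, ← C_eq_algebraMap]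
  refine (totalDegree_mul _ _).trans ?_
  rw [totalDegree_C, zero_add]
  refine (totalDegree_finsetProd _ _).trans
    ((Finset.sum_le_sum fun i _ => ?_).trans (le_totalDegree hm))
  exact (totalDegree_pow _ _).trans (by simpa using Nat.mul_le_mul_left (m i) (hg i))

section FallingMonomial

def fallingMonomial (K : Type*) [CommRing K] (p : ℕ × ℕ) : MvPolynomial (Fin 2) K :=
  Polynomial.aeval (X 0) (descPochhammer K p.1) * Polynomial.aeval (X 1) (descPochhammer K p.2)

theorem eval_fallingMonomial (K : Type*) [CommRing K] (x y : ℕ) (p : ℕ × ℕ) :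
    eval ![(x : K), y] (fallingMonomial K p) = x.descFactorial p.1 * y.descFactorial p.2 := by
  simp only [fallingMonomial, map_mul, eval_polynomial_aeval_X,
    descPochhammer_eval_eq_descFactorial, Matrix.cons_val_zero, Matrix.cons_val_one]

theorem X_pow_mul_X_pow_mem_span_fallingMonomial (K : Type*) [CommRing K] [IsDomain K]
    (a b : ℕ) :
    (X 0 : MvPolynomial (Fin 2) K) ^ a * X 1 ^ b ∈
      Submodule.span K (fallingMonomial K '' Set.Iic (a, b)) := by
  have hX : ∀ (i : Fin 2) (n : ℕ), (X i : MvPolynomial (Fin 2) K) ^ n ∈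
      Submodule.span K ((fun m => Polynomial.aeval (X i) (descPochhammer K m)) '' Set.Iic n) := by
    intro i n
    have := Submodule.apply_mem_span_image_of_mem_span
      (Polynomial.aeval (X i : MvPolynomial (Fin 2) K)).toLinearMap
      (Polynomial.X_pow_mem_span_descPochhammer K n)
    rwa [← Set.image_comp, AlgHom.toLinearMap_apply, map_pow, Polynomial.aeval_X] at this
  have hmul := Submodule.mul_mem_mul (hX 0 a) (hX 1 b)
  rw [Submodule.span_mul_span] at hmul
  refine Submodule.span_mono ?_ hmul
  rintro _ ⟨_, ⟨m, hm, rfl⟩, _, ⟨n, hn, rfl⟩, rfl⟩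
  exact ⟨(m, n), Prod.mk_le_mk.mpr ⟨hm, hn⟩, rfl⟩

theorem mem_span_fallingMonomial_of_totalDegree_le {K : Type*} [CommRing K] [IsDomain K]
    {u : MvPolynomial (Fin 2) K} {d : ℕ} (hu : u.totalDegree ≤ d) :
    u ∈ Submodule.span K (fallingMonomial K '' {p | p.1 + p.2 ≤ d}) := by
  rw [u.as_sum]
  refine Submodule.sum_mem _ fun m hm => ?_
  have hmd : m 0 + m 1 ≤ d := by
    have := (le_totalDegree hm).trans hu
    rwa [Finsupp.sum_fintype _ _ fun _ => rfl, Fin.sum_univ_two] at this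
  rw [monomial_eq, Finsupp.prod_fintype _ _ fun i => pow_zero _, Fin.prod_univ_two,
    ← smul_eq_C_mul]
  refine Submodule.smul_mem _ _
    (Submodule.span_mono ?_ (X_pow_mul_X_pow_mem_span_fallingMonomial K _ _))
  rintro _ ⟨p, hp, rfl⟩
  exact ⟨p, le_trans (add_le_add hp.1 hp.2) hmd, rfl⟩

theorem eval_fallingMonomial_ne_zero_iff {K : Type*} [CommRing K] [CharZero K] (x y : ℕ)
    (p : ℕ × ℕ) :
    eval ![(x : K), y] (fallingMonomial K p) ≠ 0 ↔ p ≤ (x, y) := by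
  rw [eval_fallingMonomial, Prod.mk_le_mk, ← Nat.cast_mul, Nat.cast_ne_zero, mul_ne_zero_iff,
    Ne, Nat.descFactorial_eq_zero_iff_lt, Ne, Nat.descFactorial_eq_zero_iff_lt, not_lt, not_lt]

theorem eq_zero_of_eval_linearCombination_fallingMonomial {K : Type*} [CommRing K] [IsDomain K]
    [CharZero K] {l : ℕ × ℕ →₀ K} {p : ℕ × ℕ}
    (h : ∀ x ≤ p,
      eval ![(x.1 : K), x.2] (Finsupp.linearCombination K (fallingMonomial K) l) = 0) :
    l p = 0 := by
  induction p using WellFoundedLT.induction with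
  | ind p ih =>
    have hp := h p le_rfl
    rw [Finsupp.linearCombination_apply, Finsupp.sum, map_sum,
      Finset.sum_eq_single p] at hp
    · rw [smul_eval] at hp
      exact (mul_eq_zero.mp hp).resolve_right
        ((eval_fallingMonomial_ne_zero_iff p.1 p.2 p).mpr le_rfl)
    · intro y _ hyp
      by_cases hy : y ≤ p
      · rw [ih y (lt_of_le_of_ne hy hyp) fun x hx => h x (hx.trans hy)]
        simp
      · rw [← eval_fallingMonomial_ne_zero_iff (K := K), not_not] at hy
        rw [smul_eval, hy, mul_zero]
    · intro hp'
      simp [Finsupp.notMem_support_iff.mp hp']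

end FallingMonomial

section DiagonalFalling

def diagonalFalling (K : Type*) [CommRing K] (d : ℕ) (k : Fin (d + 1)) :
    MvPolynomial (Fin 2) K :=
  fallingMonomial K (k, d - k)

theorem eval_diagonalFalling_eq_zero (K : Type*) [CommRing K] {d : ℕ} {x : ℕ × ℕ}
    (hx : x.1 + x.2 < d) (k : Fin (d + 1)) :
    eval ![(x.1 : K), x.2] (diagonalFalling K d k) = 0 := by
  have : x.1.descFactorial k * x.2.descFactorial (d - k) = 0 := by
    rw [mul_eq_zero, Nat.descFactorial_eq_zero_iff_lt, Nat.descFactorial_eq_zero_iff_lt]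
    omega
  rw [diagonalFalling, eval_fallingMonomial, ← Nat.cast_mul, this, Nat.cast_zero]

variable {K : Type*} [CommRing K] [IsDomain K] [CharZero K]

theorem mem_span_diagonalFalling {u : MvPolynomial (Fin 2) K} {d : ℕ} (hu : u.totalDegree ≤ d)
    (hvan : ∀ x : ℕ × ℕ, x.1 + x.2 < d → eval ![(x.1 : K), x.2] u = 0) :
    u ∈ Submodule.span K (Set.range (diagonalFalling K d)) := by
  obtain ⟨l, hl, rfl⟩ := (Finsupp.mem_span_image_iff_linearCombination K).mp
    (mem_span_fallingMonomial_of_totalDegree_le hu)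
  have hdiag : l ∈ Finsupp.supported K K {p | p.1 + p.2 = d} := by
    intro p hp
    refine (hl hp).eq_of_not_lt fun hlt => Finsupp.mem_support_iff.mp hp ?_
    exact eq_zero_of_eval_linearCombination_fallingMonomial fun x hx =>
      hvan x (lt_of_le_of_lt (add_le_add hx.1 hx.2) hlt)
  refine Submodule.span_mono ?_
    ((Finsupp.mem_span_image_iff_linearCombination K).mpr ⟨l, hdiag, rfl⟩)
  rintro _ ⟨p, hp : p.1 + p.2 = d, rfl⟩
  refine ⟨⟨p.1, by omega⟩, ?_⟩
  rw [diagonalFalling, show d - p.1 = p.2 by omega]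

theorem eq_zero_of_sum_smul_diagonalFalling_mul_eq_zero {d : ℕ}
    (M : Matrix (Fin (d + 1)) (Fin (d + 1)) K) (hM : M.IsSymm)
    (h : ∑ s, ∑ t, M s t • (diagonalFalling K d s * diagonalFalling K d t) = 0) : M = 0 := by
  refine M.eq_zero_of_isSymm_of_forall_Icc hM fun k l hkl => ?_
  refine ⟨fun t => eval ![((l : ℕ) : K), ((d - k : ℕ) : K)] (diagonalFalling K d t),
    fun t => ?_, ?_⟩
  · dsimp only
    rw [diagonalFalling, eval_fallingMonomial_ne_zero_iff, Prod.mk_le_mk, Set.mem_Icc,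
      Fin.le_def, Fin.le_def]
    omega
  · have := congrArg (eval ![((l : ℕ) : K), ((d - k : ℕ) : K)]) h
    simp only [map_sum, smul_eval, map_mul, map_zero] at this
    rw [← this]
    simp only [dotProduct, mulVec, Finset.mul_sum]
    exact Finset.sum_congr rfl fun s _ => Finset.sum_congr rfl fun t _ => by ring

end DiagonalFalling

section Ternary

variable (K : Type*) [CommRing K]

def dehomogenize : MvPolynomial (Fin 3) K →ₐ[K] MvPolynomial (Fin 2) K :=
  aeval ![X 0, X 1, 1]

theorem totalDegree_dehomogenize_le {p : MvPolynomial (Fin 3) K} {d : ℕ}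
    (hp : p.IsHomogeneous d) : (dehomogenize K p).totalDegree ≤ d := by
  refine (totalDegree_aeval_le (fun i => ?_) p).trans hp.totalDegree_le
  fin_cases i
  · exact (totalDegree_monomial_le _ _).trans (by simp)
  · exact (totalDegree_monomial_le _ _).trans (by simp)
  · simp

/-- `∏_{i<k} (x - i z) · ∏_{j<d-k} (y - j z)`. -/
def ternaryFalling (d k : ℕ) : MvPolynomial (Fin 3) K :=
  rename ![0, 2] ((descPochhammer K k).homogenize k) *
    rename ![1, 2] ((descPochhammer K (d - k)).homogenize (d - k))

theorem isHomogeneous_ternaryFalling {d k : ℕ} (hk : k ≤ d) :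
    (ternaryFalling K d k).IsHomogeneous d := by
  have hx := (Polynomial.isHomogeneous_homogenize (n := k)
    (descPochhammer K k)).rename_isHomogeneous (f := ![(0 : Fin 3), 2])
  have hy := (Polynomial.isHomogeneous_homogenize (n := d - k)
    (descPochhammer K (d - k))).rename_isHomogeneous (f := ![(1 : Fin 3), 2])
  have h := hx.mul hy
  rwa [Nat.add_sub_cancel' hk] at h

theorem dehomogenize_ternaryFalling [IsDomain K] (d k : ℕ) :
    dehomogenize K (ternaryFalling K d k) = fallingMonomial K (k, d - k) := by
  rw [ternaryFalling, dehomogenize, map_mul, aeval_rename, aeval_rename,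
    Polynomial.aeval_homogenize_of_eq_one (descPochhammer_natDegree K k).le _ (by simp),
    Polynomial.aeval_homogenize_of_eq_one (descPochhammer_natDegree K _).le _ (by simp)]
  rfl

end Ternary

def fallingSumSq (d : ℕ) : MvPolynomial (Fin 3) ℝ :=
  ∑ k : Fin (d + 1), ternaryFalling ℝ d k ^ 2

theorem isSOS_fallingSumSq (d : ℕ) : IsSOS 3 d (d + 1) (fallingSumSq d) :=
  ⟨fun k => ternaryFalling ℝ d k, fun k => isHomogeneous_ternaryFalling ℝ k.is_le, rfl⟩

theorem le_of_isSOS_fallingSumSq {d r : ℕ} (h : IsSOS 3 d r (fallingSumSq d)) : d + 1 ≤ r := by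
  obtain ⟨p, hp, hf⟩ := h
  have hsum : ∑ j, dehomogenize ℝ (p j) ^ 2 = ∑ k, diagonalFalling ℝ d k ^ 2 := by
    have := congrArg (dehomogenize ℝ) hf
    simp only [fallingSumSq, map_sum, map_pow, dehomogenize_ternaryFalling] at this
    exact this.symm
  have hvan : ∀ x : ℕ × ℕ, x.1 + x.2 < d →
      eval ![(x.1 : ℝ), x.2] (∑ k, diagonalFalling ℝ d k ^ 2) = 0 := fun x hx => by
    simp [eval_diagonalFalling_eq_zero ℝ hx]
  simpa using le_of_sum_sq_eq_sum_sq eq_zero_of_sum_smul_diagonalFalling_mul_eq_zero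
    (fun j => mem_span_diagonalFalling (totalDegree_dehomogenize_le ℝ (hp j))
      fun x hx => eval_eq_zero_of_sum_sq_eq hsum (hvan x hx) j) hsum

theorem ternary_lower_bound_general (d : ℕ) :
    ∃ f : MvPolynomial (Fin 3) ℝ, InSigma 3 d f ∧ ¬ IsSOS 3 d d f ∧
      d + 1 ≤ sosLength 3 d f :=
  ⟨fallingSumSq d, ⟨d + 1, isSOS_fallingSumSq d⟩,
    fun h => Nat.not_succ_le_self d (le_of_isSOS_fallingSumSq h),
    le_csInf ⟨d + 1, isSOS_fallingSumSq d⟩ fun _ => le_of_isSOS_fallingSumSq⟩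

/-- Lower bound for the ternary Pythagoras number: for every `d ≥ 2` there is a
sum of squares of degree-`d` forms in `ℝ[x₁,x₂,x₃]` that is not a sum of `d`
squares, i.e. `ℓ(f) ≥ d + 1`; hence `p(3,2d) ≥ d + 1`. -/
theorem ternary_lower_bound (d : ℕ) (hd : 2 ≤ d) :
    ∃ f : MvPolynomial (Fin 3) ℝ, InSigma 3 d f ∧ ¬ IsSOS 3 d d f ∧
      d + 1 ≤ sosLength 3 d f :=
  ternary_lower_bound_general d

end
end

section
/- Let n ≥ 4 and d ≥ 2, write N_e := binom(n+e−1, n−1), and let s = s_min(n,d) be the smallest integer s satisfying binom(N_d − s + 1, 2) ≤ N_{2d} − n·s. Then N_{d−1} < s < N_d. -/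
/-!
The condition `sCond n d s` is a monic quadratic inequality in `s`, so its integer solutions
form an interval. With `N = N_d`, `A = N_{d-1}` and `D = N - A`, the number of forms of
degree `d` in `n - 1` variables, that interval contains `N - n` (because
`2nN + n ≤ 2N_{2d} + n²`) but not `A` (because `2N_{2d} < D(D + 1) + 2nA`), and `A < N - n`.
Hence `A < s_min ≤ N - n`. Both binomial inequalities are proved by induction on `n`, using
`N_{n+1,e} · n = N_{n,e} · (n + e)`.
-/

/-- `N_{n,e} = binom(n+e-1, n-1)`, the dimension of the space of `n`-ary forms
of degree `e`. -/
def formDim (n e : ℕ) : ℕ := (n + e - 1).choose (n - 1)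

/-- The defining condition for `s_min(n,d)`: `binom(N_d - s + 1, 2) ≤ N_{2d} - n·s`,
read in `ℤ` (with `binom(a,2) = a(a-1)/2`). -/
def sCond (n d : ℕ) (s : ℤ) : Prop :=
  ((formDim n d : ℤ) - s + 1) * ((formDim n d : ℤ) - s) ≤
    2 * ((formDim n (2 * d) : ℤ) - n * s)

theorem Set.ordConnected_setOf_sq_add_mul_add_nonpos {R : Type*} [CommRing R] [LinearOrder R]
    [IsStrictOrderedRing R] (b c : R) : {x : R | x ^ 2 + b * x + c ≤ 0}.OrdConnected := by
  refine ⟨fun x hx y hy z ⟨hxz, hzy⟩ => ?_⟩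
  simp only [Set.mem_ofPred_eq] at hx hy ⊢
  -- `q z - q x = (z - x)(z + x + b)` and `q z - q y = (z - y)(z + y + b)`
  rcases le_or_gt (z + x + b) 0 with h | h
  · nlinarith [mul_nonneg (sub_nonneg.2 hxz) (neg_nonneg.2 h)]
  · nlinarith [mul_nonneg (sub_nonneg.2 hzy) h.le]

theorem sCond_iff_sq_add_mul_add_nonpos (n d : ℕ) (s : ℤ) :
    sCond n d s ↔ s ^ 2 + (2 * n - 2 * formDim n d - 1) * s +
      ((formDim n d + 1) * formDim n d - 2 * formDim n (2 * d)) ≤ 0 := by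
  unfold sCond
  constructor <;> intro h <;> linarith

theorem sCond_ordConnected (n d : ℕ) : {s | sCond n d s}.OrdConnected := by
  simp_rw [sCond_iff_sq_add_mul_add_nonpos]
  exact Set.ordConnected_setOf_sq_add_mul_add_nonpos _ _

section formDim

variable (n e : ℕ)

theorem formDim_monotone : Monotone (formDim n) :=
  fun _ _ h => Nat.choose_le_choose _ (by omega)

theorem formDim_succ_mul (hn : 0 < n) : formDim (n + 1) e * n = formDim n e * (n + e) := by
  obtain ⟨k, rfl⟩ : ∃ k, n = k + 1 := ⟨n - 1, by omega⟩
  have := Nat.add_one_mul_choose_eq (k + e) k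
  simp only [formDim, Nat.add_sub_cancel, show k + 1 + 1 + e - 1 = k + e + 1 by omega,
    show k + 1 + e - 1 = k + e by omega]
  linarith

theorem formDim_succ_mul_eq_formDim_succ_mul (hn : 0 < n) :
    formDim (n + 1) e * n = formDim n (e + 1) * (e + 1) := by
  obtain ⟨k, rfl⟩ : ∃ k, n = k + 1 := ⟨n - 1, by omega⟩
  have := Nat.choose_succ_right_eq (k + 1 + e) k
  simp only [formDim, Nat.add_sub_cancel, show k + 1 + (e + 1) - 1 = k + 1 + e by omega,
    show k + 1 + 1 + e - 1 = k + 1 + e by omega, show k + 1 + e - k = e + 1 by omega] at this ⊢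
  linarith

theorem formDim_eq_formDim_sub_one_add (hn : 2 ≤ n) (he : 1 ≤ e) :
    formDim n e = formDim (n - 1) e + formDim n (e - 1) := by
  obtain ⟨k, rfl⟩ : ∃ k, n = k + 2 := ⟨n - 2, by omega⟩
  obtain ⟨j, rfl⟩ : ∃ j, e = j + 1 := ⟨e - 1, by omega⟩
  simp only [formDim, Nat.add_sub_cancel, show k + 2 + (j + 1) - 1 = k + j + 1 + 1 by omega,
    show k + 2 - 1 = k + 1 by omega, show k + 1 + (j + 1) - 1 = k + j + 1 by omega,
    show k + 2 + j - 1 = k + j + 1 by omega]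
  exact Nat.choose_succ_succ' _ _

theorem two_mul_formDim_three : 2 * formDim 3 e = (e + 2) * (e + 1) := by
  have := Nat.descFactorial_eq_factorial_mul_choose (e + 2) 2
  simp only [Nat.descFactorial_succ, Nat.add_one_sub_one, tsub_zero, Nat.descFactorial_zero,
    mul_one, Nat.factorial, Nat.succ_eq_add_one, Nat.reduceAdd, zero_add] at this
  simp only [formDim, show 3 + e - 1 = e + 2 by omega, Nat.add_one_sub_one]
  linarith

theorem six_mul_formDim_four : 6 * formDim 4 e = (e + 3) * (e + 2) * (e + 1) := by
  have := Nat.descFactorial_eq_factorial_mul_choose (e + 3) 3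
  simp only [Nat.descFactorial_succ, Nat.reduceSubDiff, Nat.add_one_sub_one, tsub_zero,
    Nat.descFactorial_zero, mul_one, Nat.factorial, Nat.succ_eq_add_one, Nat.reduceAdd, zero_add,
    Nat.reduceMul] at this
  simp only [formDim, show 4 + e - 1 = e + 3 by omega, Nat.add_one_sub_one]
  linarith

theorem two_mul_formDim_two_right (hn : 0 < n) : 2 * formDim n 2 = (n + 1) * n := by
  have := Nat.descFactorial_eq_factorial_mul_choose (n + 1) 2
  simp only [Nat.descFactorial_succ, add_tsub_cancel_right, tsub_zero, Nat.descFactorial_zero,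
    mul_one, Nat.factorial, Nat.succ_eq_add_one, Nat.reduceAdd, zero_add] at this
  rw [formDim, Nat.choose_symm_of_eq_add (show n + 2 - 1 = (n - 1) + 2 by omega),
    show n + 2 - 1 = n + 1 by omega]
  linarith

theorem twentyFour_mul_formDim_four_right (hn : 0 < n) :
    24 * formDim n 4 = (n + 3) * (n + 2) * (n + 1) * n := by
  have := Nat.descFactorial_eq_factorial_mul_choose (n + 3) 4
  simp only [Nat.descFactorial_succ, add_tsub_cancel_right, Nat.reduceSubDiff, Nat.add_one_sub_one,
    tsub_zero, Nat.descFactorial_zero, mul_one, Nat.factorial, Nat.succ_eq_add_one, Nat.reduceAdd,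
    zero_add, Nat.reduceMul] at this
  rw [formDim, Nat.choose_symm_of_eq_add (show n + 4 - 1 = (n - 1) + 4 by omega),
    show n + 4 - 1 = n + 3 by omega]
  linarith

end formDim

theorem succ_mul_le_two_mul_formDim (n d : ℕ) (hn : 0 < n) (hd : 2 ≤ d) :
    (n + 1) * n ≤ 2 * formDim n d :=
  two_mul_formDim_two_right n hn ▸ Nat.mul_le_mul_left 2 (formDim_monotone n hd)

theorem two_mul_mul_formDim_two_add_le (n : ℕ) (hn : 0 < n) :
    2 * n * formDim n 2 + n ≤ 2 * formDim n 4 + n * n := by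
  have h2 := two_mul_formDim_two_right n hn
  have h4 := twentyFour_mul_formDim_four_right n hn
  rcases (show n = 1 ∨ n = 2 ∨ 3 ≤ n by omega) with rfl | rfl | h3
  · decide
  · decide
  -- twelve times the difference of the two sides is `n (n - 1) (n - 2) (n - 3)`
  obtain ⟨k, rfl⟩ : ∃ k, n = k + 3 := ⟨n - 3, by omega⟩
  nlinarith [Nat.zero_le ((k + 2) * (k + 1) * k)]

theorem mul_formDim_le_formDim_two_mul_succ (n d : ℕ) (hn : 2 ≤ n) (hd : 2 ≤ d)
    (h : n * formDim n d ≤ formDim n (2 * d)) :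
    (n + 1) * formDim (n + 1) d ≤ formDim (n + 1) (2 * d) := by
  have hN := formDim_succ_mul n d (by omega)
  have hM := formDim_succ_mul n (2 * d) (by omega)
  refine Nat.le_of_mul_le_mul_right ?_ (by omega : 0 < n)
  calc (n + 1) * formDim (n + 1) d * n = (n + 1) * (n + d) * formDim n d := by
        rw [mul_assoc, hN]; ring
    _ ≤ (n + 2 * d) * n * formDim n d := Nat.mul_le_mul_right _ (by nlinarith)
    _ = (n + 2 * d) * (n * formDim n d) := by ring
    _ ≤ (n + 2 * d) * formDim n (2 * d) := Nat.mul_le_mul_left _ h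
    _ = formDim (n + 1) (2 * d) * n := by rw [hM]; ring

theorem mul_formDim_le_formDim_two_mul (n d : ℕ) (hn : 4 ≤ n) (hd : 3 ≤ d) :
    n * formDim n d ≤ formDim n (2 * d) := by
  induction n, hn using Nat.le_induction with
  | base =>
    have hN := six_mul_formDim_four d
    have hM := six_mul_formDim_four (2 * d)
    nlinarith
  | succ n hn ih => exact mul_formDim_le_formDim_two_mul_succ n d (by omega) (by omega) ih

theorem sCond_formDim_sub (n d : ℕ) (hn : 4 ≤ n) (hd : 2 ≤ d) :
    sCond n d (formDim n d - n) := by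
  have h : 2 * n * formDim n d + n ≤ 2 * formDim n (2 * d) + n * n := by
    rcases hd.eq_or_lt with rfl | hd
    · exact two_mul_mul_formDim_two_add_le n (by omega)
    · nlinarith [mul_formDim_le_formDim_two_mul n d hn hd]
  have hz : (2 * n * formDim n d + n : ℤ) ≤ 2 * formDim n (2 * d) + n * n := by exact_mod_cast h
  unfold sCond
  linarith

theorem two_mul_formDim_two_mul_lt_succ (n d : ℕ) (hn : 2 ≤ n) (hd : 2 ≤ d)
    (h : 2 * formDim n (2 * d) <
      formDim (n - 1) d * (formDim (n - 1) d + 1) + 2 * n * formDim n (d - 1)) :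
    2 * formDim (n + 1) (2 * d) <
      formDim n d * (formDim n d + 1) + 2 * (n + 1) * formDim (n + 1) (d - 1) := by
  obtain ⟨m, rfl⟩ : ∃ m, n = m + 1 := ⟨n - 1, by omega⟩
  simp only [Nat.add_sub_cancel] at h
  have hm : 0 < m := by omega
  have hD := formDim_succ_mul m d hm
  have hA := formDim_succ_mul (m + 1) (d - 1) (by omega)
  have hM := formDim_succ_mul (m + 1) (2 * d) (by omega)
  have hAD := formDim_succ_mul_eq_formDim_succ_mul m (d - 1) hm
  have hDlow := succ_mul_le_two_mul_formDim m d hm hd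
  rw [Nat.sub_add_cancel (by omega)] at hAD
  rw [show m + 1 + (d - 1) = m + d by omega] at hA
  set D := formDim m d
  set A := formDim (m + 1) (d - 1)
  set M := formDim (m + 1) (2 * d)
  set D' := formDim (m + 1) d
  set A' := formDim (m + 2) (d - 1)
  set M' := formDim (m + 2) (2 * d)
  zify at *
  have hslack : 0 ≤ (D : ℤ) * ((m + 1) * d + 2 * m) - m * (m + 1 + 2 * d * m) := by
    nlinarith [mul_le_mul_of_nonneg_right hDlow (by positivity : (0 : ℤ) ≤ (m + 1) * d + 2 * m),
      mul_nonneg (mul_nonneg hm.le (by positivity : (0 : ℤ) ≤ d)) (sq_nonneg ((m : ℤ) - 1)),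
      mul_nonneg (mul_nonneg hm.le (by positivity : (0 : ℤ) ≤ m + 1))
        (by linarith : (0 : ℤ) ≤ m - 1)]
  -- Multiplying by `(m + 1) m²` clears the denominators of the ratios `D'/D`, `A'/A`, `M'/M`.
  have key : (m : ℤ) ^ 2 * (m + 1 + 2 * d) * (D * (D + 1) + 2 * (m + 1) * A) ≤
      (m + 1) * m ^ 2 * (D' * (D' + 1) + 2 * (m + 2) * A') := by
    have hdiff : (m + 1) * m ^ 2 * (D' * (D' + 1) + 2 * (m + 2) * A') -
        (m : ℤ) ^ 2 * (m + 1 + 2 * d) * (D * (D + 1) + 2 * (m + 1) * A) =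
        D * d * (D * ((m + 1) * d + 2 * m) - m * (m + 1 + 2 * d * m)) := by
      linear_combination ((m + 1) * (m * D' + D * (m + d)) + (m + 1) * m) * hD
        + 2 * (m + 2) * m ^ 2 * hA
        + (2 * m * (m + 2) * (m + d) - 2 * m * (m + 1) * (m + 1 + 2 * d)) * hAD
    nlinarith [mul_nonneg (mul_nonneg (Nat.cast_nonneg D : (0 : ℤ) ≤ D)
      (Nat.cast_nonneg d : (0 : ℤ) ≤ d)) hslack]
  have hM2 : ((m : ℤ) + 1) * m ^ 2 * (2 * M') = (m : ℤ) ^ 2 * (m + 1 + 2 * d) * (2 * M) := by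
    linear_combination 2 * (m : ℤ) ^ 2 * hM
  have hstep := mul_lt_mul_of_pos_left h (by positivity : (0 : ℤ) < m ^ 2 * (m + 1 + 2 * d))
  exact lt_of_mul_lt_mul_left (hM2 ▸ hstep.trans_le key) (by positivity)

theorem two_mul_formDim_two_mul_lt (n d : ℕ) (hn : 4 ≤ n) (hd : 2 ≤ d) :
    2 * formDim n (2 * d) <
      formDim (n - 1) d * (formDim (n - 1) d + 1) + 2 * n * formDim n (d - 1) := by
  induction n, hn using Nat.le_induction with
  | base =>
    have hD := two_mul_formDim_three d
    have hM := six_mul_formDim_four (2 * d)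
    have hAD : formDim 4 (d - 1) * 3 = formDim 3 d * d := by
      simpa only [Nat.sub_add_cancel (by omega : 1 ≤ d)] using
        formDim_succ_mul_eq_formDim_succ_mul 3 (d - 1) (by norm_num)
    have hpoly : 12 * ((2 * d + 3) * (2 * d + 2) * (2 * d + 1)) <
        9 * ((d + 2) * (d + 1)) ^ 2 + 18 * ((d + 2) * (d + 1)) + 48 * d * ((d + 2) * (d + 1)) := by
      nlinarith
    show 2 * formDim 4 (2 * d) < formDim 3 d * (formDim 3 d + 1) + 2 * 4 * formDim 4 (d - 1)
    nlinarith [congrArg (· ^ 2) hD, congrArg (d * ·) hD]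
  | succ n hn ih => exact two_mul_formDim_two_mul_lt_succ n d (by omega) hd ih

theorem not_sCond_formDim_sub_one (n d : ℕ) (hn : 4 ≤ n) (hd : 2 ≤ d) :
    ¬ sCond n d (formDim n (d - 1)) := by
  have hP := formDim_eq_formDim_sub_one_add n d (by omega) (by omega)
  have h := two_mul_formDim_two_mul_lt n d hn hd
  zify at hP h
  unfold sCond
  nlinarith

theorem formDim_sub_one_add_le (n d : ℕ) (hn : 4 ≤ n) (hd : 2 ≤ d) :
    formDim n (d - 1) + n ≤ formDim n d := by
  have hP := formDim_eq_formDim_sub_one_add n d (by omega) (by omega)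
  have hD := succ_mul_le_two_mul_formDim (n - 1) d (by omega) hd
  rw [Nat.sub_add_cancel (by omega)] at hD
  have := Nat.mul_le_mul_right (n - 1) hn
  omega

/-- For `n ≥ 4`, `d ≥ 2`, the smallest integer `s = s_min(n,d)` with
`binom(N_d - s + 1, 2) ≤ N_{2d} - n·s` satisfies `N_{d-1} < s < N_d`. -/
theorem sMin_between (n d : ℕ) (hn : 4 ≤ n) (hd : 2 ≤ d) (s : ℤ)
    (hs : sCond n d s) (hmin : ∀ s' : ℤ, sCond n d s' → s ≤ s') :
    (formDim n (d - 1) : ℤ) < s ∧ s < (formDim n d : ℤ) := by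
  have hupper := sCond_formDim_sub n d hn hd
  have hgap : (formDim n (d - 1) : ℤ) ≤ formDim n d - n := by
    have := formDim_sub_one_add_le n d hn hd
    omega
  refine ⟨?_, (hmin _ hupper).trans_lt (by omega)⟩
  by_contra! hle
  exact not_sCond_formDim_sub_one n d hn hd ((sCond_ordConnected n d).out hs hupper ⟨hle, hgap⟩)
end
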